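/- Let ⟨W,D⟩ be a default theory in which no justification of any default is relevant (formally: for every candidate set E arising in the construction and every default (α,β,γ) ∈ D, ¬β ∉ E). Define the monotone iteration G₀ = W and G_{i+1} = G_i ∪ {γ | (α,β,γ) ∈ D, G_i ⊨ α}. Since D is finite, there is k with G_k = G_{k+1}, and Th(G_k) is a stable extension of ⟨W,D⟩; moreover it is the unique stable extension whose negated justifications are never derivable. -/

import Mathlib

inductive Form : Type where
  | var : ℕ → Form
  | app : (n : ℕ) → ((Fin n → Bool) → Bool) → (Fin n → Form) → Form

namespace Form

def eval (σ : ℕ → Bool) : Form → Bool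
  | var x => σ x
  | app _ f a => f (fun i => (a i).eval σ)

def tru : Form := app 0 (fun _ => true) (fun i => i.elim0)
def fls : Form := app 0 (fun _ => false) (fun i => i.elim0)
def neg (φ : Form) : Form := app 1 (fun v => !(v 0)) (fun _ => φ)
def conj (φ ψ : Form) : Form := app 2 (fun v => v 0 && v 1) ![φ, ψ]
def disj (φ ψ : Form) : Form := app 2 (fun v => v 0 || v 1) ![φ, ψ]

end Form

/-- σ satisfies all formulae of A. -/
def Sat (σ : ℕ → Bool) (A : Set Form) : Prop := ∀ φ ∈ A, φ.eval σ = true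

/-- Semantic consequence A ⊨ φ. -/
def Entails (A : Set Form) (φ : Form) : Prop := ∀ σ, Sat σ A → φ.eval σ = true

/-- Th(A) = {φ | A ⊨ φ}. -/
def Th (A : Set Form) : Set Form := {φ | Entails A φ}

def Consistent (A : Set Form) : Prop := ∃ σ, Sat σ A

/-- A default rule (α : β / γ). -/
structure Default where
  pre : Form
  just : Form
  con : Form

/-- S contains W, is deductively closed, and closed under defaults applicable w.r.t. E. -/
def GammaClosed (W : Set Form) (D : Set Default) (E S : Set Form) : Prop :=
  W ⊆ S ∧ Th S = S ∧ ∀ d ∈ D, d.pre ∈ S → Form.neg d.just ∉ E → d.con ∈ S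

/-- Γ(E): the smallest set satisfying the three closure conditions. -/
def Gamma (W : Set Form) (D : Set Default) (E : Set Form) : Set Form :=
  ⋂₀ {S | GammaClosed W D E S}

/-- E is a stable extension of ⟨W,D⟩. -/
def Stable (W : Set Form) (D : Set Default) (E : Set Form) : Prop :=
  Gamma W D E = E

/-
Since no justification is ever blocked, the operator Γ does not depend on the candidate extension,
and Γ(E) is just the least deductively closed set containing W and closed under all defaults of D.
The iteration G adds the consequents of the defaults whose prerequisites have become derivable; it
can only grow through the finitely many consequents, so it stabilises at some G k. Then Th (G k) is
closed under every default, while every Γ-closed set contains each G i, so Th (G k) is that least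
set: it is Γ of any candidate, in particular of itself and of every stable extension.
-/

lemma subset_Th (A : Set Form) : A ⊆ Th A := fun φ hφ _ hσ => hσ φ hφ

lemma Th_mono {A B : Set Form} (h : A ⊆ B) : Th A ⊆ Th B :=
  fun _ hφ σ hσ => hφ σ fun ψ hψ => hσ ψ (h hψ)

lemma Th_Th (A : Set Form) : Th (Th A) = Th A :=
  Set.Subset.antisymm (fun _ hφ σ hσ => hφ σ fun _ hψ => hψ σ hσ) (subset_Th _)

lemma gammaClosed_gamma (W : Set Form) (D : Set Default) (E : Set Form) :
    GammaClosed W D E (Gamma W D E) := by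
  refine ⟨Set.subset_sInter fun S hS => hS.1, ?_, ?_⟩
  · refine Set.Subset.antisymm (fun φ hφ S hS => ?_) (subset_Th _)
    exact hS.2.1 ▸ Th_mono (Set.sInter_subset_of_mem hS) hφ
  · exact fun d hd hpre hne S hS => hS.2.2 d hd (hpre S hS) hne

lemma gamma_subset {W : Set Form} {D : Set Default} {E S : Set Form}
    (h : GammaClosed W D E S) : Gamma W D E ⊆ S :=
  Set.sInter_subset_of_mem h

lemma exists_eq_succ_of_subset_union_finite {α : Type*} {G : ℕ → Set α} {C : Set α}
    (hC : C.Finite) (hmono : Monotone G) (hG : ∀ i, G (i + 1) ⊆ G i ∪ C) :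
    ∃ k, G k = G (k + 1) := by
  have : Finite C := hC.to_subtype
  obtain ⟨n, hn⟩ := WellFoundedGT.monotone_chain_condition
    (⟨fun i => ((↑) ⁻¹' G i : Set C), fun _ _ h => Set.preimage_mono (hmono h)⟩ : ℕ →o Set C)
  refine ⟨n, (hmono n.le_succ).antisymm fun x hx => ?_⟩
  rcases hG n hx with hxn | hxC
  · exact hxn
  · exact (Set.ext_iff.mp (hn (n + 1) n.le_succ) ⟨x, hxC⟩).mpr hx

lemma iUnion_eq_of_eq_succ {α : Type*} {G : ℕ → Set α} {f : Set α → Set α}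
    (hmono : Monotone G) (hf : ∀ i, G (i + 1) = f (G i)) {k : ℕ} (hk : G k = G (k + 1)) :
    ⋃ i, G i = G k := by
  have hconst : ∀ j, G (k + j) = G k := by
    intro j
    induction j with
    | zero => rfl
    | succ j ih => rw [← add_assoc, hf, ih, ← hf, ← hk]
  refine Set.Subset.antisymm (Set.iUnion_subset fun i => ?_) (Set.subset_iUnion G k)
  rcases le_total i k with hik | hki
  · exact hmono hik
  · rw [← Nat.add_sub_cancel' hki, hconst]

def defaultStep (D : Set Default) (A : Set Form) : Set Form :=
  A ∪ {γ | ∃ d ∈ D, Entails A d.pre ∧ d.con = γ}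

section Iteration

variable {W : Set Form} {D : Set Default} {G : ℕ → Set Form}

lemma iteration_monotone (hGs : ∀ i, G (i + 1) = defaultStep D (G i)) : Monotone G :=
  monotone_nat_of_le_succ fun i => (hGs i).symm ▸ Set.subset_union_left

lemma iteration_stabilizes (hD : D.Finite) (hGs : ∀ i, G (i + 1) = defaultStep D (G i)) :
    ∃ k, G k = G (k + 1) := by
  refine exists_eq_succ_of_subset_union_finite (hD.image Default.con)
    (iteration_monotone hGs) fun i => ?_
  rw [hGs i]
  rintro x (hx | ⟨d, hd, -, rfl⟩)
  · exact Or.inl hx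
  · exact Or.inr ⟨d, hd, rfl⟩

lemma gammaClosed_Th_of_eq_succ (hG0 : G 0 = W)
    (hGs : ∀ i, G (i + 1) = defaultStep D (G i))
    {k : ℕ} (hk : G k = G (k + 1)) (E : Set Form) : GammaClosed W D E (Th (G k)) := by
  refine ⟨hG0 ▸ (iteration_monotone hGs (Nat.zero_le k)).trans (subset_Th _), Th_Th _, ?_⟩
  intro d hd hpre _
  have hcon : d.con ∈ G (k + 1) := (hGs k).symm ▸ Or.inr ⟨d, hd, hpre, rfl⟩
  exact subset_Th _ (hk ▸ hcon)

lemma iteration_subset_of_gammaClosed (hG0 : G 0 = W)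
    (hGs : ∀ i, G (i + 1) = defaultStep D (G i))
    {E S : Set Form} (hE : ∀ d ∈ D, Form.neg d.just ∉ E) (hS : GammaClosed W D E S) (i : ℕ) :
    G i ⊆ S := by
  induction i with
  | zero => exact hG0 ▸ hS.1
  | succ i ih =>
    rw [hGs]
    rintro x (hx | ⟨d, hd, hpre, rfl⟩)
    · exact ih hx
    · have hpreS : d.pre ∈ S := hS.2.1 ▸ Th_mono ih hpre
      exact hS.2.2 d hd hpreS (hE d hd)

lemma gamma_eq_Th_of_eq_succ (hG0 : G 0 = W)
    (hGs : ∀ i, G (i + 1) = defaultStep D (G i))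
    {k : ℕ} (hk : G k = G (k + 1)) {E : Set Form} (hE : ∀ d ∈ D, Form.neg d.just ∉ E) :
    Gamma W D E = Th (G k) := by
  have hGamma := gammaClosed_gamma W D E
  refine Set.Subset.antisymm (gamma_subset (gammaClosed_Th_of_eq_succ hG0 hGs hk E)) ?_
  exact hGamma.2.1 ▸ Th_mono (iteration_subset_of_gammaClosed hG0 hGs hE hGamma k)

end Iteration

/-- When no justification is ever blocked, the monotone iteration
G₀ = W, G_{i+1} = G_i ∪ {γ | (α,β,γ) ∈ D, G_i ⊨ α} stabilizes, its deductive
closure is a stable extension, and it is the unique stable extension whose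
negated justifications are never derivable. -/
theorem stmt19 (W : Set Form) (D : Set Default) (hD : D.Finite)
    (G : ℕ → Set Form) (hG0 : G 0 = W)
    (hGs : ∀ i, G (i + 1) = G i ∪ {γ | ∃ d ∈ D, Entails (G i) d.pre ∧ d.con = γ})
    (hJ : ∀ d ∈ D, Form.neg d.just ∉ Th (⋃ i, G i)) :
    (∃ k, G k = G (k + 1)) ∧
    ∀ k, G k = G (k + 1) →
      Stable W D (Th (G k)) ∧
      ∀ E : Set Form, Stable W D E → (∀ d ∈ D, Form.neg d.just ∉ E) →
        E = Th (G k) := by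
  refine ⟨iteration_stabilizes hD hGs, fun k hk => ⟨?_, fun E hE hEJ => ?_⟩⟩
  · rw [iUnion_eq_of_eq_succ (f := defaultStep D) (iteration_monotone hGs) hGs hk] at hJ
    exact gamma_eq_Th_of_eq_succ hG0 hGs hk hJ
  · exact hE ▸ gamma_eq_Th_of_eq_succ hG0 hGs hk hEJ
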